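/- Let g : ℝ → ℝ be L_g-Lipschitz with support in [0,1], and let ε > 0. For all real numbers a and b, there exists ζ of the form ζ = (1-λ)b + λa with λ ∈ [0,1] such that |g(a) · (ψ_ε(b) - ψ_ε(a))| ≤ (1/ε) · |g(a) - g(ζ)| · |b - a|. -/
import Mathlib


/-- Mean-value-type estimate: if `g` is `L_g`-Lipschitz with support in `[0,1]`, then for
all `a b : ℝ` there is `ζ = (1-λ)b + λa` with `λ ∈ [0,1]` such that
`|g(a)·(ψ_ε(b) - ψ_ε(a))| ≤ (1/ε)·|g(a) - g(ζ)|·|b - a|`. -/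
theorem mvt_estimate (ε : ℝ) (hε : 0 < ε) (Lg : ℝ) (g : ℝ → ℝ)
    (hLip : ∀ x y : ℝ, |g x - g y| ≤ Lg * |x - y|)
    (hsupp : ∀ v : ℝ, v ∉ Set.Icc (0 : ℝ) 1 → g v = 0) (a b : ℝ) :
    ∃ lam : ℝ, lam ∈ Set.Icc (0 : ℝ) 1 ∧
      |g a * ((-(max (-b) 0) / ε + max (b - 1) 0 / ε) -
          (-(max (-a) 0) / ε + max (a - 1) 0 / ε))| ≤
        (1 / ε) * |g a - g ((1 - lam) * b + lam * a)| * |b - a| := by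
  by_cases hga : g a = 0
  · refine ⟨1, ⟨zero_le_one, le_refl 1⟩, ?_⟩
    rw [hga, zero_mul, abs_zero]
    positivity
  · have ha : a ∈ Set.Icc (0:ℝ) 1 := by
      by_contra h; exact hga (hsupp a h)
    obtain ⟨ha0, ha1⟩ := ha
    have hψa : -(max (-a) 0) / ε + max (a - 1) 0 / ε = 0 := by
      rw [max_eq_right (by linarith), max_eq_right (by linarith)]; ring
    by_cases hb : b ∈ Set.Icc (0:ℝ) 1
    · obtain ⟨hb0, hb1⟩ := hb
      have hψb : -(max (-b) 0) / ε + max (b - 1) 0 / ε = 0 := by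
        rw [max_eq_right (by linarith), max_eq_right (by linarith)]; ring
      refine ⟨1, ⟨zero_le_one, le_refl 1⟩, ?_⟩
      rw [hψa, hψb, sub_zero, mul_zero, abs_zero]
      positivity
    · refine ⟨0, ⟨le_refl 0, zero_le_one⟩, ?_⟩
      have hgb : g b = 0 := hsupp b hb
      rw [hψa, sub_zero]
      have hζ : (1 - (0:ℝ)) * b + 0 * a = b := by ring
      rw [hζ, hgb, sub_zero, abs_mul]
      have key : |(-(max (-b) 0) / ε + max (b - 1) 0 / ε)| ≤ |b - a| / ε := by
        rcases lt_or_ge b 0 with h | h0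
        · rw [max_eq_left (by linarith : (0:ℝ) ≤ -b),
              max_eq_right (by linarith : b - 1 ≤ 0)]
          have h1 : -(-b)/ε + (0:ℝ)/ε ≤ 0 := by
            rw [zero_div, add_zero]
            apply div_nonpos_of_nonpos_of_nonneg <;> linarith
          rw [abs_of_nonpos h1, abs_of_nonpos (by linarith : b - a ≤ 0)]
          rw [show -(- -b / ε + 0 / ε) = -b/ε by ring,
              show -(b - a) / ε = (a-b)/ε by ring,
              div_le_div_iff_of_pos_right hε]
          linarith
        · have h : 1 < b := by
            by_contra h'
            exact hb ⟨h0, le_of_not_gt h'⟩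
          rw [max_eq_right (by linarith : -b ≤ 0),
              max_eq_left (by linarith : (0:ℝ) ≤ b - 1)]
          have h1 : (0:ℝ) ≤ -(0:ℝ)/ε + (b-1)/ε := by
            rw [neg_zero, zero_div, zero_add]
            exact div_nonneg (by linarith) hε.le
          rw [abs_of_nonneg h1, abs_of_nonneg (by linarith : (0:ℝ) ≤ b - a)]
          rw [neg_zero, zero_div, zero_add, div_le_div_iff_of_pos_right hε]
          linarith
      calc |g a| * |(-(max (-b) 0) / ε + max (b - 1) 0 / ε)|
          ≤ |g a| * (|b - a| / ε) := by
            exact mul_le_mul_of_nonneg_left key (abs_nonneg _)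
        _ = 1 / ε * |g a| * |b - a| := by field_simp
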